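/- arXiv:1103.1294 — 3 statements merged into one kernel-verified Lean document; each statement's English description precedes it below -/
import Mathlib

section
/- The series \(\sum_{n=1}^{\infty} \frac{q^{-n} \zeta}{(1 - q^{-n} \zeta)^2}\) converges in K (all denominators are nonzero since \(|q^{-n}\zeta| > 1\) for all n ≥ 1), and its absolute value equals \(|q| \cdot |\zeta|^{-1}\). -/
/-- Equation (7): for a complete nonarchimedean field `K`, `q ∈ K` with `0 < |q| < 1`
and `ζ ∈ K` with `|q| < |ζ| < 1`, the series `∑_{n≥1} q⁻ⁿζ/(1-q⁻ⁿζ)²` converges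
and its absolute value equals `|q|·|ζ|⁻¹`. -/
theorem tate_series_neg_part {K : Type*} [NormedField K] [CompleteSpace K]
    (hu : IsUltrametricDist K) (q ζ : K)
    (hq0 : 0 < ‖q‖) (hq1 : ‖q‖ < 1) (hζl : ‖q‖ < ‖ζ‖) (hζu : ‖ζ‖ < 1) :
    Summable (fun n : ℕ => q⁻¹ ^ (n + 1) * ζ / (1 - q⁻¹ ^ (n + 1) * ζ) ^ 2) ∧
      ‖∑' n : ℕ, q⁻¹ ^ (n + 1) * ζ / (1 - q⁻¹ ^ (n + 1) * ζ) ^ 2‖ = ‖q‖ * ‖ζ‖⁻¹ := by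
  set f : ℕ → K := fun n => q⁻¹ ^ (n + 1) * ζ / (1 - q⁻¹ ^ (n + 1) * ζ) ^ 2 with hf
  have hζ0 : 0 < ‖ζ‖ := lt_trans hq0 hζl
  -- norm of x_n := q⁻¹^(n+1) * ζ is > 1
  have hx : ∀ n : ℕ, 1 < ‖q⁻¹ ^ (n + 1) * ζ‖ := by
    intro n
    rw [norm_mul, norm_pow, norm_inv]
    have h1 : ‖q‖ ^ (n + 1) ≤ ‖q‖ := by
      calc ‖q‖ ^ (n + 1) ≤ ‖q‖ ^ 1 :=
        pow_le_pow_of_le_one hq0.le hq1.le (by omega)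
      _ = ‖q‖ := pow_one _
    have h2 : ‖q‖ ^ (n + 1) < ‖ζ‖ := lt_of_le_of_lt h1 hζl
    have hp : 0 < ‖q‖ ^ (n + 1) := pow_pos hq0 _
    rw [inv_pow, ← div_eq_inv_mul, lt_div_iff₀ hp, one_mul]
    exact h2
  -- norm of 1 - x_n equals norm of x_n
  have hden : ∀ n : ℕ, ‖1 - q⁻¹ ^ (n + 1) * ζ‖ = ‖q⁻¹ ^ (n + 1) * ζ‖ := by
    intro n
    have hne : ‖(1 : K)‖ ≠ ‖-(q⁻¹ ^ (n + 1) * ζ)‖ := by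
      rw [norm_one, norm_neg]; exact ne_of_lt (hx n)
    rw [sub_eq_add_neg, IsUltrametricDist.norm_add_eq_max_of_norm_ne_norm hne,
      norm_one, norm_neg, max_eq_right (hx n).le]
  -- norm of each term
  have hterm : ∀ n : ℕ, ‖f n‖ = ‖q‖ ^ (n + 1) * ‖ζ‖⁻¹ := by
    intro n
    have hxpos : 0 < ‖q⁻¹ ^ (n + 1) * ζ‖ := lt_trans one_pos (hx n)
    rw [hf]
    simp only [norm_div, norm_pow, hden n]
    rw [sq, ← div_div, div_self hxpos.ne', one_div,
      norm_mul, norm_pow, norm_inv, mul_inv, inv_pow, inv_inv]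
  -- summability
  have hsum : Summable f := by
    apply Summable.of_norm
    have : Summable (fun n : ℕ => ‖q‖ ^ (n + 1) * ‖ζ‖⁻¹) := by
      apply Summable.mul_right
      exact (summable_geometric_of_lt_one hq0.le hq1).comp_injective (add_left_injective 1)
    exact this.congr fun n => (hterm n).symm
  refine ⟨hsum, ?_⟩
  -- split off first term
  rw [Summable.tsum_eq_zero_add hsum]
  have h0 : ‖f 0‖ = ‖q‖ * ‖ζ‖⁻¹ := by rw [hterm 0, pow_one]
  have htail : ‖∑' n : ℕ, f (n + 1)‖ ≤ ‖q‖ ^ 2 * ‖ζ‖⁻¹ := by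
    apply IsUltrametricDist.norm_tsum_le_of_forall_le_of_nonneg
    · positivity
    · intro n
      rw [hterm (n + 1)]
      apply mul_le_mul_of_nonneg_right _ (by positivity)
      exact pow_le_pow_of_le_one hq0.le hq1.le (by omega)
  have hlt : ‖∑' n : ℕ, f (n + 1)‖ < ‖f 0‖ := by
    refine lt_of_le_of_lt htail ?_
    rw [h0, sq]
    have : ‖q‖ * ‖q‖ < 1 * ‖q‖ := by nlinarith
    calc ‖q‖ * ‖q‖ * ‖ζ‖⁻¹ < 1 * ‖q‖ * ‖ζ‖⁻¹ := by
          apply mul_lt_mul_of_pos_right this (by positivity)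
      _ = ‖q‖ * ‖ζ‖⁻¹ := by ring
    
  have hne : ‖f 0‖ ≠ ‖∑' n : ℕ, f (n + 1)‖ := (ne_of_lt hlt).symm
  rw [IsUltrametricDist.norm_add_eq_max_of_norm_ne_norm hne, max_eq_left hlt.le, h0]
end

section
/- The series \(\sum_{n=1}^{\infty} \frac{n q^n}{1 - q^n}\) converges in K (all denominators are nonzero since \(|q^n| < 1\) for all n ≥ 1), and the absolute value of \(2 \sum_{n=1}^{\infty} \frac{n q^n}{1 - q^n}\) equals \(|2| \cdot |q|\). -/
/-!
Since `|q^n| < 1`, the ultrametric inequality gives `|1 - q^n| = 1` and `|n q^n| ≤ |q|^n`, so the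
series converges and every term after the first has absolute value at most `|q|^2 < |q|`. The first
term `q / (1 - q)` has absolute value `|q|`, and in an ultrametric field a sum with one strictly
dominant term has the absolute value of that term.
-/

namespace IsUltrametricDist

section AddGroup

variable {S : Type*} [SeminormedAddGroup S] [IsUltrametricDist S]

lemma norm_add_eq_left_of_norm_lt {x y : S} (h : ‖y‖ < ‖x‖) : ‖x + y‖ = ‖x‖ := by
  rw [norm_add_eq_max_of_norm_ne_norm h.ne', max_eq_left h.le]

lemma norm_sub_eq_left_of_norm_lt {x y : S} (h : ‖y‖ < ‖x‖) : ‖x - y‖ = ‖x‖ := by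
  rw [sub_eq_add_neg]
  exact norm_add_eq_left_of_norm_lt (by rwa [norm_neg])

end AddGroup

lemma norm_tsum_eq_norm_zero {S : Type*} [NormedAddCommGroup S] [IsUltrametricDist S]
    {f : ℕ → S} (hf : Summable f) {C : ℝ} (hC : C < ‖f 0‖) (htail : ∀ n, ‖f (n + 1)‖ ≤ C) :
    ‖∑' n, f n‖ = ‖f 0‖ := by
  have hC₀ : 0 ≤ C := (norm_nonneg _).trans (htail 0)
  rw [hf.tsum_eq_zero_add]
  exact norm_add_eq_left_of_norm_lt ((norm_tsum_le_of_forall_le_of_nonneg hC₀ htail).trans_lt hC)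

variable {K : Type*} [NormedField K] [IsUltrametricDist K]

lemma norm_div_one_sub_eq_norm {x : K} (hx : ‖x‖ < 1) (y : K) : ‖y / (1 - x)‖ = ‖y‖ := by
  rw [norm_div, norm_sub_eq_left_of_norm_lt (by rwa [norm_one]), norm_one, div_one]

lemma norm_nsmul_pow_div_one_sub_pow_le {x : K} (hx : ‖x‖ < 1) (n : ℕ) {k : ℕ} (hk : k ≠ 0) :
    ‖n • x ^ k / (1 - x ^ k)‖ ≤ ‖x‖ ^ k := by
  have hxk : ‖x ^ k‖ < 1 := by
    rw [norm_pow]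
    exact pow_lt_one₀ (norm_nonneg x) hx hk
  rw [norm_div_one_sub_eq_norm hxk, ← norm_pow]
  exact norm_nsmul_le _ _

end IsUltrametricDist

/-- Equation (8): for a complete nonarchimedean field `K` and `q ∈ K` with `0 < |q| < 1`,
the series `∑_{n≥1} n·qⁿ/(1-qⁿ)` converges, and `|2·∑_{n≥1} n·qⁿ/(1-qⁿ)| = |2|·|q|`.
Here `n·qⁿ` is the `n`-fold sum `qⁿ + ⋯ + qⁿ`. -/
theorem tate_series_constant_part {K : Type*} [NormedField K] [CompleteSpace K]
    (hu : IsUltrametricDist K) (q : K) (hq0 : 0 < ‖q‖) (hq1 : ‖q‖ < 1) :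
    Summable (fun n : ℕ => ((n + 1) • q ^ (n + 1)) / (1 - q ^ (n + 1))) ∧
      ‖(2 : K) * ∑' n : ℕ, ((n + 1) • q ^ (n + 1)) / (1 - q ^ (n + 1))‖ = ‖(2 : K)‖ * ‖q‖ := by
  set f : ℕ → K := fun n => ((n + 1) • q ^ (n + 1)) / (1 - q ^ (n + 1)) with hf
  have hbound (n : ℕ) : ‖f n‖ ≤ ‖q‖ ^ (n + 1) :=
    IsUltrametricDist.norm_nsmul_pow_div_one_sub_pow_le hq1 _ n.succ_ne_zero
  have hsum : Summable f :=
    .of_norm_bounded ((summable_nat_add_iff 1).mpr (summable_geometric_of_lt_one hq0.le hq1)) hbound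
  have hf0 : ‖f 0‖ = ‖q‖ := by
    simpa [hf] using IsUltrametricDist.norm_div_one_sub_eq_norm hq1 q
  have htail (n : ℕ) : ‖f (n + 1)‖ ≤ ‖q‖ ^ 2 :=
    (hbound (n + 1)).trans (pow_le_pow_of_le_one hq0.le hq1.le (by omega))
  have hdom : ‖q‖ ^ 2 < ‖f 0‖ := hf0.symm ▸ pow_lt_self_of_lt_one₀ hq0 hq1 one_lt_two
  exact ⟨hsum, by rw [norm_mul, IsUltrametricDist.norm_tsum_eq_norm_zero hsum hdom htail, hf0]⟩
end

section
/- All three series \(S_1 = \sum_{n=0}^{\infty} \frac{q^n \zeta}{(1 - q^n \zeta)^2}\), \(S_2 = \sum_{n=1}^{\infty} \frac{q^{-n} \zeta}{(1 - q^{-n} \zeta)^2}\) and \(S_3 = 2\sum_{n=1}^{\infty} \frac{n q^n}{1 - q^n}\) converge in K, and the Tate x-coordinate \(x(\zeta) = S_1 + S_2 - S_3\) satisfies \(|x(\zeta)| \le \max\{\, |\zeta|,\ |q| \cdot |\zeta|^{-1} \,\}\). -/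
/-! The three series are dominated termwise by geometric series in `‖q‖`, because in an
ultrametric field `‖1 - x‖` is `1` when `‖x‖ < 1` and `‖x‖` when `‖x‖ > 1`. Hence every term
of `S₁` has norm at most `‖ζ‖`, every term of `S₂` at most `‖q‖ / ‖ζ‖`, and every term of `S₃`
at most `‖q‖ < ‖ζ‖`; the ultrametric inequality passes these bounds to the sums and to
`S₁ + S₂ - S₃`. -/

namespace IsUltrametricDist

lemma norm_add_sub_le_max {E : Type*} [SeminormedAddGroup E] [IsUltrametricDist E]
    (a b c : E) : ‖a + b - c‖ ≤ max (max ‖a‖ ‖b‖) ‖c‖ := by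
  simpa only [sub_eq_add_neg, norm_neg] using
    (norm_add_le_max (a + b) (-c)).trans (max_le_max_right _ (norm_add_le_max a b))

section Ring

variable {R : Type*} [SeminormedRing R] [NormOneClass R] [IsUltrametricDist R] {x : R}

lemma norm_one_sub_of_norm_lt_one (hx : ‖x‖ < 1) : ‖1 - x‖ = 1 := by
  rw [sub_eq_add_neg, norm_add_eq_max_of_norm_ne_norm (by rw [norm_neg, norm_one]; exact hx.ne'),
    norm_neg, norm_one, max_eq_left hx.le]

lemma norm_one_sub_of_one_lt_norm (hx : 1 < ‖x‖) : ‖1 - x‖ = ‖x‖ := by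
  rw [sub_eq_add_neg, norm_add_eq_max_of_norm_ne_norm (by rw [norm_neg, norm_one]; exact hx.ne),
    norm_neg, norm_one, max_eq_right hx.le]

end Ring

section DivisionRing

variable {K : Type*} [NormedDivisionRing K] [IsUltrametricDist K] {x : K}

lemma norm_div_one_sub_sq_of_norm_lt_one (hx : ‖x‖ < 1) : ‖x / (1 - x) ^ 2‖ = ‖x‖ := by
  rw [norm_div, norm_pow, norm_one_sub_of_norm_lt_one hx, one_pow, div_one]

lemma norm_div_one_sub_sq_of_one_lt_norm (hx : 1 < ‖x‖) : ‖x / (1 - x) ^ 2‖ = ‖x‖⁻¹ := by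
  rw [norm_div, norm_pow, norm_one_sub_of_one_lt_norm hx, sq, div_mul_cancel_left₀ (by positivity)]

lemma norm_nsmul_div_one_sub_le (hx : ‖x‖ < 1) (m : ℕ) : ‖m • x / (1 - x)‖ ≤ ‖x‖ := by
  rw [norm_div, norm_one_sub_of_norm_lt_one hx, div_one]
  exact norm_nsmul_le x m

end DivisionRing

lemma summable_and_norm_tsum_le_of_norm_le_mul_geometric {E : Type*} [SeminormedAddCommGroup E]
    [CompleteSpace E] [IsUltrametricDist E] {f : ℕ → E} {C r : ℝ} (hr0 : 0 ≤ r) (hr1 : r < 1)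
    (hf : ∀ n, ‖f n‖ ≤ C * r ^ n) : Summable f ∧ ‖∑' n, f n‖ ≤ C := by
  have hC : 0 ≤ C := (norm_nonneg _).trans (by simpa using hf 0)
  refine ⟨.of_norm_bounded ((summable_geometric_of_lt_one hr0 hr1).mul_left C) hf, ?_⟩
  exact norm_tsum_le_of_forall_le fun n => (hf n).trans (mul_le_of_le_one_right hC
    (pow_le_one₀ hr0 hr1.le))

end IsUltrametricDist

open IsUltrametricDist

section TateSeries

variable {K : Type*} [NormedDivisionRing K] [IsUltrametricDist K] {q ζ : K}

lemma norm_tateSeries_pos_term (hq : ‖q‖ ≤ 1) (hζ : ‖ζ‖ < 1) (n : ℕ) :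
    ‖q ^ n * ζ / (1 - q ^ n * ζ) ^ 2‖ = ‖ζ‖ * ‖q‖ ^ n := by
  have hx : ‖q ^ n * ζ‖ = ‖ζ‖ * ‖q‖ ^ n := by rw [norm_mul, norm_pow, mul_comm]
  rw [norm_div_one_sub_sq_of_norm_lt_one (hx ▸ mul_lt_one_of_nonneg_of_lt_one_left
    (norm_nonneg _) hζ (pow_le_one₀ (norm_nonneg _) hq)), hx]

lemma norm_tateSeries_neg_term (hq0 : 0 < ‖q‖) (hq1 : ‖q‖ ≤ 1) (hqζ : ‖q‖ < ‖ζ‖) (n : ℕ) :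
    ‖q⁻¹ ^ (n + 1) * ζ / (1 - q⁻¹ ^ (n + 1) * ζ) ^ 2‖ = ‖q‖ * ‖ζ‖⁻¹ * ‖q‖ ^ n := by
  have hx : ‖q⁻¹ ^ (n + 1) * ζ‖ = ‖ζ‖ / ‖q‖ ^ (n + 1) := by
    rw [norm_mul, norm_pow, norm_inv, inv_pow, inv_mul_eq_div]
  have hqn : ‖q‖ ^ (n + 1) < ‖ζ‖ := (pow_le_of_le_one hq0.le hq1 n.succ_ne_zero).trans_lt hqζ
  rw [norm_div_one_sub_sq_of_one_lt_norm (hx ▸ (one_lt_div (by positivity)).mpr hqn), hx,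
    inv_div, pow_succ']
  ring

lemma norm_tateSeries_const_term_le (hq : ‖q‖ < 1) (n : ℕ) :
    ‖((n + 1) • q ^ (n + 1)) / (1 - q ^ (n + 1))‖ ≤ ‖q‖ * ‖q‖ ^ n := by
  have hx : ‖q ^ (n + 1)‖ < 1 := by
    rw [norm_pow]
    exact pow_lt_one₀ (norm_nonneg _) hq n.succ_ne_zero
  exact (norm_nsmul_div_one_sub_le hx (n + 1)).trans_eq (by rw [norm_pow, pow_succ'])

end TateSeries

/-- Equation (9): for a complete nonarchimedean field `K`, `q ∈ K` with `0 < |q| < 1`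
and `ζ ∈ K` with `|q| < |ζ| < 1`, the three series `S₁ = ∑_{n≥0} qⁿζ/(1-qⁿζ)²`,
`S₂ = ∑_{n≥1} q⁻ⁿζ/(1-q⁻ⁿζ)²` and `S₃ = 2·∑_{n≥1} n·qⁿ/(1-qⁿ)` converge, and the
Tate x-coordinate `x(ζ) = S₁ + S₂ - S₃` satisfies `|x(ζ)| ≤ max {|ζ|, |q|·|ζ|⁻¹}`. -/
theorem tate_x_coordinate_bound {K : Type*} [NormedField K] [CompleteSpace K]
    (hu : IsUltrametricDist K) (q ζ : K)
    (hq0 : 0 < ‖q‖) (hq1 : ‖q‖ < 1) (hζl : ‖q‖ < ‖ζ‖) (hζu : ‖ζ‖ < 1) :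
    Summable (fun n : ℕ => q ^ n * ζ / (1 - q ^ n * ζ) ^ 2) ∧
    Summable (fun n : ℕ => q⁻¹ ^ (n + 1) * ζ / (1 - q⁻¹ ^ (n + 1) * ζ) ^ 2) ∧
    Summable (fun n : ℕ => ((n + 1) • q ^ (n + 1)) / (1 - q ^ (n + 1))) ∧
    ‖(∑' n : ℕ, q ^ n * ζ / (1 - q ^ n * ζ) ^ 2)
        + (∑' n : ℕ, q⁻¹ ^ (n + 1) * ζ / (1 - q⁻¹ ^ (n + 1) * ζ) ^ 2)
        - (2 : K) * ∑' n : ℕ, ((n + 1) • q ^ (n + 1)) / (1 - q ^ (n + 1))‖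
      ≤ max ‖ζ‖ (‖q‖ * ‖ζ‖⁻¹) := by
  have := hu
  obtain ⟨hs₁, hb₁⟩ := summable_and_norm_tsum_le_of_norm_le_mul_geometric hq0.le hq1
    fun n => (norm_tateSeries_pos_term hq1.le hζu n).le
  obtain ⟨hs₂, hb₂⟩ := summable_and_norm_tsum_le_of_norm_le_mul_geometric hq0.le hq1
    fun n => (norm_tateSeries_neg_term hq0 hq1.le hζl n).le
  obtain ⟨hs₃, hb₃⟩ := summable_and_norm_tsum_le_of_norm_le_mul_geometric hq0.le hq1
    (norm_tateSeries_const_term_le hq1)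
  refine ⟨hs₁, hs₂, hs₃, (norm_add_sub_le_max _ _ _).trans (max_le (max_le_max hb₁ hb₂) ?_)⟩
  have hS₃ := hb₃.trans hζl.le
  rw [two_mul]
  exact le_max_of_le_left ((norm_add_le_max _ _).trans (max_le hS₃ hS₃))
end
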